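/- Let (L₁, …, L_h; w₁, …, w_h) be a vertex hierarchy of height h on the weighted graph G = (V, w₁). Let p = (v₀, v₁, …, v_n) be a walk from s = v₀ to t = v_n in w₁ whose length equals dist_G(s,t), and let 0 ≤ a < b ≤ n be indices such that ℓ(v_a) < ℓ(v_b) and ℓ(v_j) < ℓ(v_a) for every j with a < j < b. Then v_a and v_b are adjacent in w_{ℓ(v_a)}, and w_{ℓ(v_a)} v_a v_b equals the length of the subwalk (v_a, v_{a+1}, …, v_b), which in turn equals dist_G(v_a, v_b). -/

import Mathlib

/-!
A subwalk of a shortest walk is shortest, and no edge of any `w_i` is shorter than the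
`w₁`-distance between its ends, since augmenting edges have the lengths of walks.
Conversely, deleting the level-`i` vertices from a `w_i`-walk whose ends lie above level `i`
yields a `w_{i+1}`-walk that is no longer and visits no new vertex: by independence each
deleted vertex sits between two vertices of higher level, which the augmenting edge through it
joins (or which coincide, and the detour is cut out). Doing this for `i = 1, …, ℓ(v_a) - 1` to
the subwalk `v_a … v_b` gives a `w_{ℓ(v_a)}`-walk inside `V_{ℓ(v_a)}`; the only vertices of
the subwalk there are `v_a` and `v_b`, so the walk starts with the edge `v_a v_b`, whose weight
is then squeezed between `dist_G(v_a, v_b)` and the length of the subwalk.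
-/

namespace ISLabel

variable {V : Type*}

/-- Two vertices are adjacent in the weighted graph `w` when they are distinct and
joined by an edge of finite weight. -/
def Adj (w : V → V → ℕ∞) (u v : V) : Prop := u ≠ v ∧ w u v < ⊤

/-- `p` is a walk from `u` to `v` in the weighted graph `w`: a nonempty list of
vertices starting at `u`, ending at `v`, with consecutive vertices adjacent. -/
def IsWalk (w : V → V → ℕ∞) (u v : V) (p : List V) : Prop :=
  p ≠ [] ∧ p.head? = some u ∧ p.getLast? = some v ∧ p.Chain' (Adj w)

/-- The length of a list of vertices: the sum of `f` over consecutive pairs. -/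
def pathLen (f : V → V → ℕ∞) (p : List V) : ℕ∞ :=
  ((p.zip p.tail).map fun e => f e.1 e.2).sum

/-- The distance from `u` to `v` in `w`: the infimum of the lengths of all walks
from `u` to `v` (`⊤` if there is no such walk). -/
noncomputable def wdist (w : V → V → ℕ∞) (u v : V) : ℕ∞ :=
  ⨅ p : {p : List V // IsWalk w u v p}, pathLen w p.1

/-- `I` is an independent set in `w`. -/
def IsIndep (w : V → V → ℕ∞) (I : Set V) : Prop :=
  ∀ u ∈ I, ∀ v ∈ I, ¬ Adj w u v

/-- `w` is a weighted undirected graph: symmetric, and every off-diagonal value is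
either `⊤` (no edge) or a weight `≥ 1`. -/
def IsWGraph (w : V → V → ℕ∞) : Prop :=
  (∀ u v, w u v = w v u) ∧ ∀ u v, u ≠ v → 1 ≤ w u v

/-- `w` is supported on `S`: all weights touching a vertex outside `S` are `⊤`. -/
def SupportedOn (w : V → V → ℕ∞) (S : Set V) : Prop :=
  ∀ u v, u ∉ S ∨ v ∉ S → w u v = ⊤

/-- `VsetOf L i` is the vertex set `V_i = V ∖ (L₁ ∪ … ∪ L_{i-1})`. -/
def VsetOf (L : ℕ → Set V) (i : ℕ) : Set V := {v | ∀ j, 1 ≤ j → j < i → v ∉ L j}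

/-- A vertex hierarchy of height `h ≥ 1` on the weighted graph `w 1`:
pairwise disjoint independent levels `L 1, …, L h` covering `V`, and graphs
`w i` supported on `V_i` obtained by the augmenting-edge construction. -/
structure VertexHierarchy (V : Type*) (h : ℕ) where
  L : ℕ → Set V
  w : ℕ → V → V → ℕ∞
  h_pos : 1 ≤ h
  wgraph : ∀ i, 1 ≤ i → i ≤ h → IsWGraph (w i)
  disj : ∀ i j, 1 ≤ i → i ≤ h → 1 ≤ j → j ≤ h → i ≠ j → ∀ v, v ∈ L i → v ∉ L j
  cover : ∀ v : V, ∃ i, 1 ≤ i ∧ i ≤ h ∧ v ∈ L i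
  supported : ∀ i, 1 ≤ i → i ≤ h → SupportedOn (w i) (VsetOf L i)
  aug : ∀ i, 2 ≤ i → i ≤ h → ∀ u v : V, u ≠ v → u ∈ VsetOf L i → v ∈ VsetOf L i →
    w i u v = min (w (i - 1) u v) (⨅ x ∈ L (i - 1), w (i - 1) u x + w (i - 1) x v)
  indep : ∀ i, 1 ≤ i → i ≤ h → IsIndep (w i) (L i)

/-- The level `ℓ(v)`: the unique `i` with `1 ≤ i ≤ h` and `v ∈ L i`. -/
noncomputable def level {h : ℕ} (H : VertexHierarchy V h) (v : V) : ℕ :=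
  sInf {i | 1 ≤ i ∧ i ≤ h ∧ v ∈ H.L i}

section Walks

variable {w : V → V → ℕ∞} {s t u v x y : V} {l p q l₁ l₂ : List V}

@[simp]
lemma pathLen_nil (f : V → V → ℕ∞) : pathLen f [] = 0 := rfl

@[simp]
lemma pathLen_singleton (f : V → V → ℕ∞) (x : V) : pathLen f [x] = 0 := rfl

@[simp]
lemma pathLen_cons_cons (f : V → V → ℕ∞) (x y : V) (l : List V) :
    pathLen f (x :: y :: l) = f x y + pathLen f (y :: l) := by
  simp [pathLen]

lemma le_pathLen_cons_cons (f : V → V → ℕ∞) (x y : V) (l : List V) :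
    f x y ≤ pathLen f (x :: y :: l) := by
  rw [pathLen_cons_cons]
  exact le_self_add

lemma pathLen_append_cons (f : V → V → ℕ∞) (l₁ : List V) (x : V) (l₂ : List V) :
    pathLen f (l₁ ++ x :: l₂) = pathLen f (l₁ ++ [x]) + pathLen f (x :: l₂) := by
  induction l₁ with
  | nil => simp
  | cons a l₁ ih =>
    cases l₁ with
    | nil => simp
    | cons b l₁ =>
      simp only [List.cons_append, pathLen_cons_cons] at ih ⊢
      rw [ih, add_assoc]

lemma pathLen_lt_top (hl : l.IsChain (Adj w)) : pathLen w l < ⊤ := by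
  induction l with
  | nil => simp
  | cons x l ih =>
    cases l with
    | nil => simp
    | cons y l =>
      rw [List.isChain_cons_cons] at hl
      rw [pathLen_cons_cons]
      exact ENat.add_lt_top.mpr ⟨hl.1.2, ih hl.2⟩

lemma isWalk_iff_isChain :
    IsWalk w u v p ↔ p ≠ [] ∧ p.head? = some u ∧ p.getLast? = some v ∧ p.IsChain (Adj w) :=
  Iff.rfl

lemma isWalk_singleton (w : V → V → ℕ∞) (u : V) : IsWalk w u u [u] :=
  ⟨by simp, rfl, rfl, List.isChain_singleton u⟩

lemma IsWalk.eq_cons (hp : IsWalk w u v p) : p = u :: p.tail := by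
  obtain ⟨hne, hhead, -⟩ := hp
  cases p with
  | nil => exact absurd rfl hne
  | cons a l => simp_all

lemma IsWalk.eq_concat (hp : IsWalk w u v p) : p = p.dropLast ++ [v] :=
  (List.dropLast_append_getLast? v hp.2.2.1).symm

lemma isWalk_cons_cons :
    IsWalk w u v (x :: y :: l) ↔ x = u ∧ Adj w x y ∧ IsWalk w y v (y :: l) := by
  simp only [isWalk_iff_isChain, List.isChain_cons_cons, List.getLast?_cons_cons]
  simp [eq_comm, and_left_comm]

lemma IsWalk.cons (hxy : Adj w x y) (hp : IsWalk w y v p) : IsWalk w x v (x :: p) := by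
  have hp' := hp
  rw [hp.eq_cons] at hp' ⊢
  exact isWalk_cons_cons.mpr ⟨rfl, hxy, hp'⟩

lemma IsWalk.pathLen_cons (f : V → V → ℕ∞) (x : V) (hp : IsWalk w y v p) :
    pathLen f (x :: p) = f x y + pathLen f p := by
  rw [hp.eq_cons, pathLen_cons_cons]

lemma IsWalk.exists_eq_cons_cons (hp : IsWalk w u v p) (huv : u ≠ v) :
    ∃ y l, p = u :: y :: l := by
  obtain _ | ⟨x, _ | ⟨y, l⟩⟩ := p
  · exact absurd rfl hp.1
  · exact absurd (by simpa using hp.2.1.symm.trans hp.2.2.1) huv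
  · exact ⟨y, l, by rw [(isWalk_cons_cons.mp hp).1]⟩

lemma IsWalk.drop_take (hp : IsWalk w s t p) {a b : ℕ} (hab : a ≤ b) (hb : b < p.length) (d : V) :
    IsWalk w (p.getD a d) (p.getD b d) ((p.drop a).take (b - a + 1)) := by
  refine ⟨?_, ?_, ?_, (hp.2.2.2.drop a).take _⟩
  · simp only [ne_eq, List.take_eq_nil_iff, List.drop_eq_nil_iff]
    omega
  · simp [List.head?_take, List.getD_eq_getElem?_getD, List.getElem?_eq_getElem (hab.trans_lt hb)]
  · simp [List.getLast?_take, Nat.add_sub_cancel' hab, List.getD_eq_getElem?_getD,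
      List.getElem?_eq_getElem hb]

lemma IsWalk.isWalk_append_iff (hq : IsWalk w u v q) :
    IsWalk w s t (l₁ ++ q ++ l₂) ↔ IsWalk w s u (l₁ ++ [u]) ∧ IsWalk w v t (v :: l₂) := by
  obtain ⟨hne, hhead, hlast, hchain⟩ := isWalk_iff_isChain.mp hq
  simp [isWalk_iff_isChain, List.isChain_append, List.isChain_cons, List.head?_append,
    List.getLast?_append, List.getLast?_cons, hne, hhead, hlast, hchain,
    and_assoc, and_left_comm, and_comm]

lemma IsWalk.pathLen_append (f : V → V → ℕ∞) (hq : IsWalk w u v q) :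
    pathLen f (l₁ ++ q ++ l₂) = pathLen f (l₁ ++ [u]) + pathLen f q + pathLen f (v :: l₂) := by
  have hsplit_u : l₁ ++ q ++ l₂ = l₁ ++ u :: (q.tail ++ l₂) := by
    conv_lhs => rw [hq.eq_cons]
    simp
  have hsplit_v : u :: (q.tail ++ l₂) = q.dropLast ++ v :: l₂ := by
    rw [← List.cons_append, ← hq.eq_cons]
    conv_lhs => rw [hq.eq_concat]
    simp
  rw [hsplit_u, pathLen_append_cons, hsplit_v, pathLen_append_cons f q.dropLast, ← hq.eq_concat,
    add_assoc]

lemma IsWalk.append_tail (hp : IsWalk w u x p) (hq : IsWalk w x v q) :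
    IsWalk w u v (p ++ q.tail) := by
  have h := (isWalk_singleton w x).isWalk_append_iff (l₁ := p.dropLast) (l₂ := q.tail) |>.mpr
    ⟨by rwa [← hp.eq_concat], by rwa [← hq.eq_cons]⟩
  rwa [← hp.eq_concat] at h

lemma IsWalk.pathLen_append_tail (f : V → V → ℕ∞) (hp : IsWalk w u x p) (hq : IsWalk w x v q) :
    pathLen f (p ++ q.tail) = pathLen f p + pathLen f q := by
  have h := (isWalk_singleton w x).pathLen_append f (l₁ := p.dropLast) (l₂ := q.tail)
  rwa [← hp.eq_concat, ← hq.eq_cons, pathLen_singleton, add_zero] at h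

lemma wdist_le_pathLen (hp : IsWalk w u v p) : wdist w u v ≤ pathLen w p :=
  iInf_le (fun q : {p // IsWalk w u v p} => pathLen w q.1) ⟨p, hp⟩

lemma wdist_self (w : V → V → ℕ∞) (u : V) : wdist w u u = 0 :=
  le_antisymm (wdist_le_pathLen (isWalk_singleton w u)) zero_le

lemma wdist_le (w : V → V → ℕ∞) (u v : V) : wdist w u v ≤ w u v := by
  rcases eq_or_ne u v with rfl | huv
  · simp [wdist_self]
  rcases eq_or_ne (w u v) ⊤ with htop | hfin
  · simp [htop]
  simpa using wdist_le_pathLen ((isWalk_singleton w v).cons ⟨huv, hfin.lt_top⟩)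

lemma exists_isWalk_pathLen_eq_wdist (h : wdist w u v ≠ ⊤) :
    ∃ p, IsWalk w u v p ∧ pathLen w p = wdist w u v := by
  have : Nonempty {p // IsWalk w u v p} := by
    by_contra hempty
    rw [not_nonempty_iff] at hempty
    exact h (iInf_of_empty _)
  obtain ⟨⟨p, hp⟩, hpe⟩ := ciInf_mem fun q : {p // IsWalk w u v p} => pathLen w q.1
  exact ⟨p, hp, hpe⟩

lemma wdist_triangle (w : V → V → ℕ∞) (u x v : V) :
    wdist w u v ≤ wdist w u x + wdist w x v := by
  rcases eq_or_ne (wdist w u x) ⊤ with h₁ | h₁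
  · simp [h₁]
  rcases eq_or_ne (wdist w x v) ⊤ with h₂ | h₂
  · simp [h₂]
  obtain ⟨p, hp, hpe⟩ := exists_isWalk_pathLen_eq_wdist h₁
  obtain ⟨q, hq, hqe⟩ := exists_isWalk_pathLen_eq_wdist h₂
  calc wdist w u v ≤ pathLen w (p ++ q.tail) := wdist_le_pathLen (hp.append_tail hq)
    _ = wdist w u x + wdist w x v := by rw [hp.pathLen_append_tail w hq, hpe, hqe]

lemma IsWalk.pathLen_eq_wdist_of_append (hp : IsWalk w s t (l₁ ++ q ++ l₂))
    (hmin : pathLen w (l₁ ++ q ++ l₂) = wdist w s t) (hq : IsWalk w u v q) :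
    pathLen w q = wdist w u v := by
  obtain ⟨hpre, hsuf⟩ := hq.isWalk_append_iff.mp hp
  refine le_antisymm (le_iInf fun q' => ?_) (wdist_le_pathLen hq)
  have hspliced := wdist_le_pathLen (q'.2.isWalk_append_iff.mpr ⟨hpre, hsuf⟩)
  rw [← hmin, hq.pathLen_append, q'.2.pathLen_append] at hspliced
  exact (WithTop.add_le_add_iff_left (pathLen_lt_top hpre.2.2.2).ne).mp
    ((WithTop.add_le_add_iff_right (pathLen_lt_top hsuf.2.2.2).ne).mp hspliced)

lemma IsWalk.pathLen_drop_take_eq_wdist (hp : IsWalk w s t p)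
    (hmin : pathLen w p = wdist w s t) {a b : ℕ} (hab : a ≤ b) (hb : b < p.length) (d : V) :
    pathLen w ((p.drop a).take (b - a + 1)) = wdist w (p.getD a d) (p.getD b d) := by
  have hsplit : p.take a ++ (p.drop a).take (b - a + 1) ++ p.drop (b + 1) = p := by
    rw [show b + 1 = a + (b - a + 1) by omega, ← List.drop_drop, List.append_assoc,
      List.take_append_drop, List.take_append_drop]
  have hsub := hp.drop_take hab hb d
  rw [← hsplit] at hp hmin
  exact hp.pathLen_eq_wdist_of_append hmin hsub

end Walks

lemma exists_getD_eq_of_mem_take_drop {α : Type*} {l : List α} {a n : ℕ} {y : α}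
    (hy : y ∈ (l.drop a).take n) (d : α) : ∃ j, a ≤ j ∧ j < a + n ∧ l.getD j d = y := by
  obtain ⟨k, hk, rfl⟩ := List.mem_iff_getElem.mp hy
  simp only [List.length_take, List.length_drop, lt_min_iff] at hk
  refine ⟨a + k, by omega, by omega, ?_⟩
  rw [List.getD_eq_getElem _ _ (by omega)]
  simp

lemma mem_vsetOf_succ {L : ℕ → Set V} {i : ℕ} {v : V} (hv : v ∈ VsetOf L i) (hvi : v ∉ L i) :
    v ∈ VsetOf L (i + 1) := by
  intro j hj₁ hj
  rcases Nat.lt_succ_iff_lt_or_eq.mp hj with hj | rfl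
  · exact hv j hj₁ hj
  · exact hvi

namespace VertexHierarchy

variable {h : ℕ} (H : VertexHierarchy V h) {i : ℕ} {u v x y z : V}

lemma level_spec (v : V) : 1 ≤ level H v ∧ level H v ≤ h ∧ v ∈ H.L (level H v) :=
  Nat.sInf_mem (H.cover v)

lemma level_eq_of_mem (hi₁ : 1 ≤ i) (hih : i ≤ h) (hv : v ∈ H.L i) : level H v = i := by
  obtain ⟨h₁, h₂, hmem⟩ := H.level_spec v
  by_contra hne
  exact H.disj _ i h₁ h₂ hi₁ hih hne v hmem hv

lemma le_level_of_mem_vsetOf (hv : v ∈ VsetOf H.L i) : i ≤ level H v := by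
  obtain ⟨h₁, -, hmem⟩ := H.level_spec v
  by_contra! hlt
  exact hv _ h₁ hlt hmem

lemma mem_vsetOf_of_adj (hi₁ : 1 ≤ i) (hih : i ≤ h) (huv : Adj (H.w i) u v) :
    u ∈ VsetOf H.L i ∧ v ∈ VsetOf H.L i := by
  by_contra hout
  exact huv.2.ne (H.supported i hi₁ hih u v (not_and_or.mp hout))

lemma w_succ_eq (hi₁ : 1 ≤ i) (hih : i + 1 ≤ h) (huv : u ≠ v) (hu : u ∈ VsetOf H.L (i + 1))
    (hv : v ∈ VsetOf H.L (i + 1)) :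
    H.w (i + 1) u v = min (H.w i u v) (⨅ x ∈ H.L i, H.w i u x + H.w i x v) :=
  H.aug (i + 1) (by omega) hih u v huv hu hv

lemma w_succ_le (hi₁ : 1 ≤ i) (hih : i + 1 ≤ h) (hxy : Adj (H.w i) x y) (hx : x ∉ H.L i)
    (hy : y ∉ H.L i) : H.w (i + 1) x y ≤ H.w i x y := by
  obtain ⟨hxV, hyV⟩ := H.mem_vsetOf_of_adj hi₁ (by omega) hxy
  rw [H.w_succ_eq hi₁ hih hxy.1 (mem_vsetOf_succ hxV hx) (mem_vsetOf_succ hyV hy)]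
  exact min_le_left _ _

lemma w_succ_le_add (hi₁ : 1 ≤ i) (hih : i + 1 ≤ h) (hxy : Adj (H.w i) x y)
    (hyz : Adj (H.w i) y z) (hxz : x ≠ z) (hx : x ∉ H.L i) (hy : y ∈ H.L i) (hz : z ∉ H.L i) :
    H.w (i + 1) x z ≤ H.w i x y + H.w i y z := by
  rw [H.w_succ_eq hi₁ hih hxz (mem_vsetOf_succ (H.mem_vsetOf_of_adj hi₁ (by omega) hxy).1 hx)
    (mem_vsetOf_succ (H.mem_vsetOf_of_adj hi₁ (by omega) hyz).2 hz)]
  exact (min_le_right _ _).trans (iInf₂_le y hy)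

theorem wdist_le_w (hi₁ : 1 ≤ i) (hih : i ≤ h) (u v : V) : wdist (H.w 1) u v ≤ H.w i u v := by
  induction i, hi₁ using Nat.le_induction generalizing u v with
  | base => exact wdist_le _ u v
  | succ i hi₁ ih =>
    rcases eq_or_ne u v with rfl | huv
    · simp [wdist_self]
    by_cases hV : u ∈ VsetOf H.L (i + 1) ∧ v ∈ VsetOf H.L (i + 1)
    · rw [H.w_succ_eq hi₁ hih huv hV.1 hV.2]
      refine le_min (ih (by omega) u v) (le_iInf₂ fun x _ => ?_)
      exact (wdist_triangle _ u x v).trans (add_le_add (ih (by omega) u x) (ih (by omega) x v))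
    · rw [H.supported (i + 1) (by omega) hih u v (not_and_or.mp hV)]
      exact le_top

theorem exists_isWalk_succ (hi₁ : 1 ≤ i) (hih : i + 1 ≤ h) (hv : v ∉ H.L i) :
    ∀ {u : V} {p : List V}, IsWalk (H.w i) u v p → u ∉ H.L i →
      ∃ p', IsWalk (H.w (i + 1)) u v p' ∧ pathLen (H.w (i + 1)) p' ≤ pathLen (H.w i) p ∧ p' ⊆ p
  | _, [], hp, _ => absurd rfl hp.1
  | u, [_], hp, _ => by
    obtain rfl : u = v := by simpa using hp.2.1.symm.trans hp.2.2.1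
    exact ⟨[u], isWalk_singleton _ u, le_rfl, by simpa using hp.2.1.symm⟩
  | u, x :: y :: p, hp, hu => by
    obtain ⟨rfl, hxy, hyp⟩ := isWalk_cons_cons.mp hp
    by_cases hy : y ∈ H.L i
    · obtain _ | ⟨z, p⟩ := p
      · obtain rfl : y = v := by simpa using hyp.2.2.1
        exact absurd hy hv
      obtain ⟨-, hyz, hzp⟩ := isWalk_cons_cons.mp hyp
      have hz : z ∉ H.L i := fun hz => H.indep i hi₁ (by omega) y hy z hz hyz
      obtain ⟨p', hp', hlen, hsub⟩ := exists_isWalk_succ hi₁ hih hv hzp hz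
      by_cases hxz : x = z
      · subst hxz
        refine ⟨p', hp', hlen.trans ?_,
          List.subset_cons_of_subset _ (List.subset_cons_of_subset _ hsub)⟩
        simp only [pathLen_cons_cons]
        exact le_add_left (le_add_left le_rfl)
      · have hle := H.w_succ_le_add hi₁ hih hxy hyz hxz hu hy hz
        refine ⟨x :: p', hp'.cons ⟨hxz, hle.trans_lt (ENat.add_lt_top.mpr ⟨hxy.2, hyz.2⟩)⟩, ?_,
          List.cons_subset_cons x (List.subset_cons_of_subset y hsub)⟩
        rw [hp'.pathLen_cons, pathLen_cons_cons, pathLen_cons_cons, ← add_assoc]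
        exact add_le_add hle hlen
    · obtain ⟨p', hp', hlen, hsub⟩ := exists_isWalk_succ hi₁ hih hv hyp hy
      have hle := H.w_succ_le hi₁ hih hxy hu hy
      refine ⟨x :: p', hp'.cons ⟨hxy.1, hle.trans_lt hxy.2⟩, ?_, List.cons_subset_cons x hsub⟩
      rw [hp'.pathLen_cons, pathLen_cons_cons]
      exact add_le_add hle hlen

theorem exists_isWalk_of_le_level (hi₁ : 1 ≤ i) (hih : i ≤ h) (hu : i ≤ level H u)
    (hv : i ≤ level H v) {p : List V} (hp : IsWalk (H.w 1) u v p) :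
    ∃ p', IsWalk (H.w i) u v p' ∧ pathLen (H.w i) p' ≤ pathLen (H.w 1) p ∧ p' ⊆ p := by
  induction i, hi₁ using Nat.le_induction with
  | base => exact ⟨p, hp, le_rfl, List.Subset.refl p⟩
  | succ i hi₁ ih =>
    obtain ⟨q, hq, hlen, hsub⟩ := ih (by omega) (by omega) (by omega)
    have hnot : ∀ x, i < level H x → x ∉ H.L i := fun x hx hmem => by
      rw [H.level_eq_of_mem hi₁ (by omega) hmem] at hx
      exact lt_irrefl i hx
    obtain ⟨q', hq', hlen', hsub'⟩ :=
      H.exists_isWalk_succ hi₁ hih (hnot v (by omega)) hq (hnot u (by omega))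
    exact ⟨q', hq', hlen'.trans hlen, List.Subset.trans hsub' hsub⟩

end VertexHierarchy

theorem shortest_walk_record_edge_general {h : ℕ} (H : VertexHierarchy V h)
    (s t : V) (p : List V) (hp : IsWalk (H.w 1) s t p)
    (hlen : pathLen (H.w 1) p = wdist (H.w 1) s t)
    (a b : ℕ) (hab : a < b) (hb : b < p.length)
    (hlv : level H (p.getD a s) < level H (p.getD b s))
    (hmid : ∀ j, a < j → j < b → level H (p.getD j s) < level H (p.getD a s)) :
    Adj (H.w (level H (p.getD a s))) (p.getD a s) (p.getD b s) ∧
    H.w (level H (p.getD a s)) (p.getD a s) (p.getD b s) =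
      pathLen (H.w 1) ((p.drop a).take (b - a + 1)) ∧
    pathLen (H.w 1) ((p.drop a).take (b - a + 1)) =
      wdist (H.w 1) (p.getD a s) (p.getD b s) := by
  set A := p.getD a s
  set B := p.getD b s
  have hQmin := hp.pathLen_drop_take_eq_wdist hlen hab.le hb s
  obtain ⟨hℓ₁, hℓh, -⟩ := H.level_spec A
  obtain ⟨W, hW, hWQ, hWsub⟩ :=
    H.exists_isWalk_of_le_level hℓ₁ hℓh le_rfl hlv.le (hp.drop_take hab.le hb s)
  obtain ⟨c, W, rfl⟩ := hW.exists_eq_cons_cons (fun hAB => hlv.ne (congrArg (level H) hAB))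
  obtain ⟨-, hAc, -⟩ := isWalk_cons_cons.mp hW
  -- `c` lies in `V_ℓ(A)`, which the subwalk meets only in its endpoints.
  obtain rfl : c = B := by
    have hcQ : c ∈ (p.drop a).take (b - a + 1) := hWsub (by simp)
    obtain ⟨j, haj, hjb, rfl⟩ := exists_getD_eq_of_mem_take_drop hcQ s
    have hℓc := H.le_level_of_mem_vsetOf (H.mem_vsetOf_of_adj hℓ₁ hℓh hAc).2
    have hja : j ≠ a := by rintro rfl; exact hAc.1 rfl
    have hj_not_lt : ¬ j < b := fun hj => (hmid j (by omega) hj).not_ge hℓc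
    obtain rfl : j = b := by omega
    rfl
  refine ⟨hAc, le_antisymm ((le_pathLen_cons_cons _ A B W).trans hWQ) ?_, hQmin⟩
  exact hQmin ▸ H.wdist_le_w hℓ₁ hℓh A B

/-- on a shortest walk, consecutive "level-record" vertices are
adjacent in the graph at the lower level, with exact weight. -/
theorem shortest_walk_record_edge [Fintype V] {h : ℕ} (H : VertexHierarchy V h)
    (s t : V) (p : List V) (hp : IsWalk (H.w 1) s t p)
    (hlen : pathLen (H.w 1) p = wdist (H.w 1) s t)
    (a b : ℕ) (hab : a < b) (hb : b < p.length)
    (hlv : level H (p.getD a s) < level H (p.getD b s))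
    (hmid : ∀ j, a < j → j < b → level H (p.getD j s) < level H (p.getD a s)) :
    Adj (H.w (level H (p.getD a s))) (p.getD a s) (p.getD b s) ∧
    H.w (level H (p.getD a s)) (p.getD a s) (p.getD b s) =
      pathLen (H.w 1) ((p.drop a).take (b - a + 1)) ∧
    pathLen (H.w 1) ((p.drop a).take (b - a + 1)) =
      wdist (H.w 1) (p.getD a s) (p.getD b s) :=
  shortest_walk_record_edge_general H s t p hp hlen a b hab hb hlv hmid

end ISLabel
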